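/- arXiv:1701.04145 — 2 statements merged into one kernel-verified Lean document; each statement's English description precedes it below -/
import Mathlib

section
/- Let A be an n×n Hermitian matrix (n ≥ 2) with universal perfect state transfer, and for vertices u, v ∈ ℤ/nℤ let t_{u,v} denote the minimum element of T_{u,v} = {t > 0 : |exp(−itA)_{v,u}| = 1} (assume these minima exist). Assume t_{0,k} < t_{0,k+1} for all k = 1,…,n−2, and that t_{0,1} = min{t_{k,k+1} : k ∈ ℤ/nℤ} (indices taken mod n). Then A is switching equivalent to a circulant matrix if and only if t_{k,k+1} = t_{0,1} for all k ∈ ℤ/nℤ. -/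
open Matrix Complex

/-- The continuous-time quantum walk `exp(-i t A)`. -/
noncomputable def qwalk {n : ℕ} [NeZero n] (A : Matrix (ZMod n) (ZMod n) ℂ) (t : ℝ) :
    Matrix (ZMod n) (ZMod n) ℂ :=
  NormedSpace.exp ((-(Complex.I * t)) • A)

/-- Perfect state transfer from `u` to `v` at time `t`. -/
def pst {n : ℕ} [NeZero n] (A : Matrix (ZMod n) (ZMod n) ℂ) (u v : ZMod n) (t : ℝ) : Prop :=
  ‖qwalk A t v u‖ = 1

/-- Universal perfect state transfer. -/
def upst {n : ℕ} [NeZero n] (A : Matrix (ZMod n) (ZMod n) ℂ) : Prop :=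
  ∀ u v : ZMod n, ∃ t : ℝ, 0 < t ∧ pst A u v t

/-- The circulant matrix `Circ(a₀,…,a_{n-1})`, with `C_{j,k} = a_{k-j}`. -/
def Circ {n : ℕ} (a : ZMod n → ℂ) : Matrix (ZMod n) (ZMod n) ℂ :=
  fun j k => a (k - j)

/-- A monomial matrix: product of a permutation matrix and an invertible diagonal
matrix. -/
def IsMonomial {n : ℕ} [NeZero n] (M : Matrix (ZMod n) (ZMod n) ℂ) : Prop :=
  ∃ (σ : Equiv.Perm (ZMod n)) (d : ZMod n → ℂ),
    (∀ i, d i ≠ 0) ∧ M = (σ.permMatrix ℂ) * Matrix.diagonal d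

/-- `A` and `B` are switching equivalent if `M A = B M` for some monomial `M`. -/
def SwitchingEquiv {n : ℕ} [NeZero n] (A B : Matrix (ZMod n) (ZMod n) ℂ) : Prop :=
  ∃ M : Matrix (ZMod n) (ZMod n) ℂ, IsMonomial M ∧ M * A = B * M

section Aux

variable {n : ℕ} [NeZero n] {A : Matrix (ZMod n) (ZMod n) ℂ}

lemma qwalk_add (A : Matrix (ZMod n) (ZMod n) ℂ) (s t : ℝ) :
    qwalk A (s + t) = qwalk A s * qwalk A t := by
  unfold qwalk
  rw [← Matrix.exp_add_of_commute _ _ (((Commute.refl A).smul_left _).smul_right _),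
    ← add_smul]
  congr 2
  push_cast
  ring

lemma qwalk_zero (A : Matrix (ZMod n) (ZMod n) ℂ) : qwalk A 0 = 1 := by
  unfold qwalk
  have : (-(Complex.I * (0:ℝ))) • A = 0 := by norm_num
  rw [this]
  exact NormedSpace.exp_zero

lemma qwalk_conjTranspose (hA : A.IsHermitian) (s : ℝ) :
    (qwalk A s)ᴴ = qwalk A (-s) := by
  unfold qwalk
  rw [← Matrix.exp_conjTranspose, Matrix.conjTranspose_smul, hA.eq]
  congr 1
  push_cast
  simp

lemma qwalk_mul_neg (A : Matrix (ZMod n) (ZMod n) ℂ) (s : ℝ) :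
    qwalk A s * qwalk A (-s) = 1 := by
  rw [← qwalk_add]
  simp [qwalk_zero]

lemma qwalk_conjT_mul (hA : A.IsHermitian) (s : ℝ) :
    (qwalk A s)ᴴ * qwalk A s = 1 := by
  rw [qwalk_conjTranspose hA]
  have := qwalk_mul_neg A (-s)
  simpa using this

lemma qwalk_mul_conjT (hA : A.IsHermitian) (s : ℝ) :
    qwalk A s * (qwalk A s)ᴴ = 1 := by
  rw [qwalk_conjTranspose hA]
  exact qwalk_mul_neg A s

lemma qwalk_colsum (hA : A.IsHermitian) (s : ℝ) (u : ZMod n) :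
    ∑ v : ZMod n, Complex.normSq (qwalk A s v u) = 1 := by
  have h := congrFun (congrFun (qwalk_conjT_mul hA s) u) u
  rw [Matrix.mul_apply] at h
  simp only [Matrix.conjTranspose_apply, Matrix.one_apply_eq] at h
  have h2 : ∑ v : ZMod n, ((Complex.normSq (qwalk A s v u) : ℂ)) = 1 := by
    rw [← h]
    refine Finset.sum_congr rfl fun v _ => ?_
    rw [Complex.star_def, Complex.normSq_eq_conj_mul_self]
  exact_mod_cast h2

lemma qwalk_rowsum (hA : A.IsHermitian) (s : ℝ) (v : ZMod n) :
    ∑ u : ZMod n, Complex.normSq (qwalk A s v u) = 1 := by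
  have h := congrFun (congrFun (qwalk_mul_conjT hA s) v) v
  rw [Matrix.mul_apply] at h
  simp only [Matrix.conjTranspose_apply, Matrix.one_apply_eq] at h
  have h2 : ∑ u : ZMod n, ((Complex.normSq (qwalk A s v u) : ℂ)) = 1 := by
    rw [← h]
    refine Finset.sum_congr rfl fun u _ => ?_
    rw [Complex.star_def, Complex.normSq_eq_conj_mul_self, mul_comm]
  exact_mod_cast h2

lemma pst_col_zero (hA : A.IsHermitian) {u v : ZMod n} {s : ℝ} (h : pst A u v s) :
    ∀ w, w ≠ v → qwalk A s w u = 0 := by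
  intro w hw
  have hsum := qwalk_colsum hA s u
  have hv : Complex.normSq (qwalk A s v u) = 1 := by
    rw [← Complex.sq_norm, h]; norm_num
  have h3 : ∑ x : ZMod n, Complex.normSq (qwalk A s x u)
      = Complex.normSq (qwalk A s v u)
        + ∑ x ∈ Finset.univ.erase v, Complex.normSq (qwalk A s x u) :=
    (Finset.add_sum_erase Finset.univ
      (fun x => Complex.normSq (qwalk A s x u)) (Finset.mem_univ v)).symm
  rw [h3, hv] at hsum
  have hsplit : ∑ x ∈ Finset.univ.erase v, Complex.normSq (qwalk A s x u) = 0 := by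
    linarith
  have hz := (Finset.sum_eq_zero_iff_of_nonneg
    (fun x _ => Complex.normSq_nonneg _)).mp hsplit w (by simp [hw])
  exact Complex.normSq_eq_zero.mp hz

lemma pst_row_zero (hA : A.IsHermitian) {u v : ZMod n} {s : ℝ} (h : pst A u v s) :
    ∀ w, w ≠ u → qwalk A s v w = 0 := by
  intro w hw
  have hsum := qwalk_rowsum hA s v
  have hv : Complex.normSq (qwalk A s v u) = 1 := by
    rw [← Complex.sq_norm, h]; norm_num
  have h3 : ∑ x : ZMod n, Complex.normSq (qwalk A s v x)
      = Complex.normSq (qwalk A s v u)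
        + ∑ x ∈ Finset.univ.erase u, Complex.normSq (qwalk A s v x) :=
    (Finset.add_sum_erase Finset.univ
      (fun x => Complex.normSq (qwalk A s v x)) (Finset.mem_univ u)).symm
  rw [h3, hv] at hsum
  have hsplit : ∑ x ∈ Finset.univ.erase u, Complex.normSq (qwalk A s v x) = 0 := by
    linarith
  have hz := (Finset.sum_eq_zero_iff_of_nonneg
    (fun x _ => Complex.normSq_nonneg _)).mp hsplit w (by simp [hw])
  exact Complex.normSq_eq_zero.mp hz

lemma pst_target_unique (hA : A.IsHermitian) {u v w : ZMod n} {s : ℝ}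
    (h1 : pst A u v s) (h2 : pst A u w s) : v = w := by
  by_contra hvw
  have hz := pst_col_zero hA h1 w (fun h => hvw h.symm)
  rw [pst, hz] at h2
  simp at h2

lemma pst_source_unique (hA : A.IsHermitian) {u v w : ZMod n} {s : ℝ}
    (h1 : pst A u w s) (h2 : pst A v w s) : u = v := by
  by_contra huv
  have hz := pst_row_zero hA h1 v (fun h => huv h.symm)
  rw [pst, hz] at h2
  simp at h2

lemma pst_comp (hA : A.IsHermitian) {u v w : ZMod n} {a b : ℝ}
    (h1 : pst A u v a) (h2 : pst A v w b) : pst A u w (a + b) := by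
  have hq : qwalk A (a + b) = qwalk A b * qwalk A a := by
    rw [← qwalk_add, add_comm]
  unfold pst
  rw [hq, Matrix.mul_apply]
  have hone : ∑ l : ZMod n, qwalk A b w l * qwalk A a l u
      = qwalk A b w v * qwalk A a v u := by
    refine Fintype.sum_eq_single v fun l hl => ?_
    rw [pst_col_zero hA h1 l hl, mul_zero]
  rw [hone, norm_mul, h1, h2, mul_one]

lemma pst_shift (hA : A.IsHermitian) {u v w : ZMod n} {a b : ℝ}
    (h1 : pst A u v a) (h2 : pst A u w b) : pst A v w (b - a) := by
  have hq : qwalk A (b - a) = qwalk A b * qwalk A (-a) := by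
    rw [← qwalk_add]; ring_nf
  unfold pst
  rw [hq, ← qwalk_conjTranspose hA, Matrix.mul_apply]
  have hone : ∑ l : ZMod n, qwalk A b w l * (qwalk A a)ᴴ l v
      = qwalk A b w u * (qwalk A a)ᴴ u v := by
    refine Fintype.sum_eq_single u fun l hl => ?_
    rw [Matrix.conjTranspose_apply, pst_row_zero hA h1 l hl]
    simp
  rw [hone, norm_mul, h2, Matrix.conjTranspose_apply, one_mul]
  rw [show star (qwalk A a v u) = (starRingEnd ℂ) (qwalk A a v u) from rfl,
    Complex.norm_conj]
  exact h1

lemma pst_perm (hA : A.IsHermitian) (e : Equiv.Perm (ZMod n)) (q : ZMod n → ℂ)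
    (hq : ∀ j, q j ≠ 0)
    (hrel : ∀ j k, q j * A j k = A (e j) (e k) * q k)
    {u v : ZMod n} {s : ℝ} (h : pst A u v s) : pst A (e u) (e v) s := by
  set Q : Matrix (ZMod n) (ZMod n) ℂ := fun i j => if i = e j then q j else 0 with hQdef
  have hQentry : ∀ i j, Q i j = if i = e j then q j else 0 := fun i j => rfl
  have hQA : Q * A = A * Q := by
    ext i k
    rw [Matrix.mul_apply, Matrix.mul_apply]
    have hL : ∑ l : ZMod n, Q i l * A l k = q (e.symm i) * A (e.symm i) k := by
      rw [Fintype.sum_eq_single (e.symm i) fun l hl => ?_]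
      · rw [hQentry, if_pos (by rw [Equiv.apply_symm_apply])]
      · rw [hQentry, if_neg (fun hc => hl (by rw [hc, Equiv.symm_apply_apply])), zero_mul]
    have hR : ∑ l : ZMod n, A i l * Q l k = A i (e k) * q k := by
      rw [Fintype.sum_eq_single (e k) fun l hl => ?_]
      · rw [hQentry, if_pos rfl]
      · rw [hQentry, if_neg (fun hc => hl hc), mul_zero]
    rw [hL, hR]
    have h5 := hrel (e.symm i) k
    rwa [Equiv.apply_symm_apply] at h5
  have hQA' : Commute Q A := hQA
  have hcomm : Commute Q ((-(Complex.I * s)) • A) := hQA'.smul_right _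
  have hQU : Q * qwalk A s = qwalk A s * Q := hcomm.exp_right
  have hkey : ∀ i k, q i * qwalk A s i k = qwalk A s (e i) (e k) * q k := by
    intro i k
    have h1 := congrFun (congrFun hQU (e i)) k
    rw [Matrix.mul_apply, Matrix.mul_apply] at h1
    have hL : ∑ l : ZMod n, Q (e i) l * qwalk A s l k
        = q i * qwalk A s i k := by
      rw [Fintype.sum_eq_single i fun l hl => ?_]
      · rw [hQentry, if_pos rfl]
      · rw [hQentry, if_neg (fun hc => hl (e.injective hc).symm), zero_mul]
    have hR : ∑ l : ZMod n, qwalk A s (e i) l * Q l k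
        = qwalk A s (e i) (e k) * q k := by
      rw [Fintype.sum_eq_single (e k) fun l hl => ?_]
      · rw [hQentry, if_pos rfl]
      · rw [hQentry, if_neg (fun hc => hl hc), mul_zero]
    rw [hL, hR] at h1
    exact h1
  have hz : ∀ w, w ≠ e v → qwalk A s w (e u) = 0 := by
    intro w hw
    have h1 := hkey (e.symm w) u
    have h2 : qwalk A s (e.symm w) u = 0 := by
      apply pst_col_zero hA h
      intro hc
      exact hw (by rw [← hc, Equiv.apply_symm_apply])
    rw [h2, mul_zero, Equiv.apply_symm_apply] at h1
    rcases mul_eq_zero.mp h1.symm with h4 | h4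
    · exact h4
    · exact absurd h4 (hq u)
  have hsum := qwalk_colsum hA s (e u)
  have hone : ∑ x : ZMod n, Complex.normSq (qwalk A s x (e u))
      = Complex.normSq (qwalk A s (e v) (e u)) := by
    refine Fintype.sum_eq_single (e v) fun w hw => ?_
    rw [hz w hw]
    simp
  rw [hone] at hsum
  have habs : ‖qwalk A s (e v) (e u)‖ ^ 2 = 1 := by
    rw [Complex.sq_norm]; exact hsum
  unfold pst
  nlinarith [norm_nonneg (qwalk A s (e v) (e u))]

end Aux

section Fwd

variable {n : ℕ} [NeZero n] {A : Matrix (ZMod n) (ZMod n) ℂ}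

lemma circ_pst_transfer (hA : A.IsHermitian) (a : ZMod n → ℂ)
    (σ : Equiv.Perm (ZMod n)) (d : ZMod n → ℂ) (hd : ∀ i, d i ≠ 0)
    (hMA : (σ.permMatrix ℂ) * Matrix.diagonal d * A
      = Circ a * ((σ.permMatrix ℂ) * Matrix.diagonal d)) :
    ∀ u v : ZMod n, ∀ s : ℝ, pst A u v s →
      pst A (σ (σ.symm u - 1)) (σ (σ.symm v - 1)) s := by
  have hMform : ∀ i j, ((σ.permMatrix ℂ) * Matrix.diagonal d) i j
      = if σ i = j then d j else 0 := by
    intro i j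
    rw [Matrix.mul_apply]
    rw [Fintype.sum_eq_single (σ i) fun l hl => ?_]
    · have h1 : (σ.permMatrix ℂ) i (σ i) = 1 := by
        simp [Equiv.Perm.permMatrix, PEquiv.toMatrix_apply, Equiv.toPEquiv_apply]
      rw [h1, one_mul, Matrix.diagonal_apply]
      split_ifs with h2
      · rw [h2]
      · rfl
    · simp only [Equiv.Perm.permMatrix, PEquiv.toMatrix_apply, Equiv.toPEquiv_apply,
        Option.mem_def, Option.some.injEq]
      rw [if_neg (fun hc => hl hc.symm), zero_mul]
  have hR : ∀ i k, d (σ i) * A (σ i) k = a (σ.symm k - i) * d k := by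
    intro i k
    have h1 := congrFun (congrFun hMA i) k
    rw [Matrix.mul_apply, Matrix.mul_apply] at h1
    have hL : ∑ l : ZMod n, ((σ.permMatrix ℂ) * Matrix.diagonal d) i l * A l k
        = d (σ i) * A (σ i) k := by
      rw [Fintype.sum_eq_single (σ i) fun l hl => ?_]
      · rw [hMform, if_pos rfl]
      · rw [hMform, if_neg (fun hc => hl hc.symm), zero_mul]
    have hRR : ∑ l : ZMod n, Circ a i l * ((σ.permMatrix ℂ) * Matrix.diagonal d) l k
        = a (σ.symm k - i) * d k := by
      rw [Fintype.sum_eq_single (σ.symm k) fun l hl => ?_]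
      · rw [hMform, if_pos (by rw [Equiv.apply_symm_apply])]
        rfl
      · rw [hMform, if_neg (fun hc => hl (by rw [← hc, Equiv.symm_apply_apply])), mul_zero]
    rw [hL, hRR] at h1
    exact h1
  have hAform : ∀ j k, A j k = (d j)⁻¹ * (a (σ.symm k - σ.symm j) * d k) := by
    intro j k
    have h1 := hR (σ.symm j) k
    rw [Equiv.apply_symm_apply] at h1
    rw [← h1, inv_mul_cancel_left₀ (hd j)]
  set e : Equiv.Perm (ZMod n) := σ.symm.trans ((Equiv.subRight (1 : ZMod n)).trans σ)
    with hedef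
  have he : ∀ x, e x = σ (σ.symm x - 1) := fun x => rfl
  have hesymm : ∀ x, σ.symm (e x) = σ.symm x - 1 := by
    intro x
    rw [he, Equiv.symm_apply_apply]
  intro u v s h
  have hrel : ∀ j k, (fun j => d j * (d (e j))⁻¹) j * A j k
      = A (e j) (e k) * (fun j => d j * (d (e j))⁻¹) k := by
    intro j k
    simp only
    rw [hAform j k, hAform (e j) (e k), hesymm, hesymm]
    have hΔ : σ.symm k - 1 - (σ.symm j - 1) = σ.symm k - σ.symm j := by ring
    rw [hΔ]
    have hdj := hd j; have hdk := hd k; have hdej := hd (e j); have hdek := hd (e k)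
    field_simp
  have := pst_perm hA e (fun j => d j * (d (e j))⁻¹)
    (fun j => mul_ne_zero (hd j) (inv_ne_zero (hd (e j)))) hrel h
  rwa [he, he] at this

end Fwd

section Bwd

variable {n : ℕ} [NeZero n] {A : Matrix (ZMod n) (ZMod n) ℂ}

lemma permMatrix_one_eq : ((1 : Equiv.Perm (ZMod n)).permMatrix ℂ) = 1 := by
  unfold Equiv.Perm.permMatrix
  rw [show (1 : Equiv.Perm (ZMod n)) = Equiv.refl _ from rfl, Equiv.toPEquiv_refl,
    PEquiv.toMatrix_refl]

lemma switching_of_shift_walk (hA : A.IsHermitian) (τ : ℝ)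
    (hpst : ∀ k : ZMod n, pst A k (k + 1) τ) :
    ∃ a : ZMod n → ℂ, SwitchingEquiv A (Circ a) := by
  set U := qwalk A τ with hU
  set γ : ZMod n → ℂ := fun k => U (k + 1) k with hγ
  have hγ1 : ∀ k, ‖γ k‖ = 1 := fun k => hpst k
  have hγ0 : ∀ k, γ k ≠ 0 := by
    intro k hk
    have := hγ1 k
    rw [hk] at this
    simp at this
  have hcol : ∀ (k w : ZMod n), w ≠ k + 1 → U w k = 0 :=
    fun k => pst_col_zero hA (hpst k)
  have hAU : A * U = U * A :=
    (((Commute.refl A).smul_right (-(Complex.I * τ))).exp_right : _)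
  have key : ∀ j k, γ j * A j k = A (j + 1) (k + 1) * γ k := by
    intro j k
    have h1 := congrFun (congrFun hAU (j + 1)) k
    rw [Matrix.mul_apply, Matrix.mul_apply] at h1
    have hL : ∑ l : ZMod n, A (j + 1) l * U l k = A (j + 1) (k + 1) * γ k := by
      rw [Fintype.sum_eq_single (k + 1) fun l hl => ?_]
      rw [hcol k l hl, mul_zero]
    have hR : ∑ l : ZMod n, U (j + 1) l * A l k = γ j * A j k := by
      rw [Fintype.sum_eq_single j fun l hl => ?_]
      rw [hcol l (j + 1) (fun hc => hl ((add_left_injective 1 hc).symm)), zero_mul]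
    rw [hL, hR] at h1
    exact h1.symm
  -- build the switching diagonal
  set c : ℂ := ∏ i : ZMod n, γ i with hc
  have hc0 : c ≠ 0 := Finset.prod_ne_zero_iff.mpr fun i _ => hγ0 i
  set lam : ℂ := c⁻¹ ^ ((n : ℂ)⁻¹) with hlam
  have hlamn : lam ^ n = c⁻¹ := Complex.cpow_nat_inv_pow _ (NeZero.ne n)
  have hlam0 : lam ≠ 0 := by
    intro h0
    rw [h0, zero_pow (NeZero.ne n)] at hlamn
    exact inv_ne_zero hc0 hlamn.symm
  set d : ZMod n → ℂ := fun j => lam ^ j.val * ∏ i ∈ Finset.range j.val, γ (i : ZMod n)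
    with hd
  have hd0 : ∀ j, d j ≠ 0 := by
    intro j
    exact mul_ne_zero (pow_ne_zero _ hlam0)
      (Finset.prod_ne_zero_iff.mpr fun i _ => hγ0 _)
  have hprod : ∏ i ∈ Finset.range n, γ ((i : ℕ) : ZMod n) = c := by
    rw [hc]
    apply Finset.prod_bij (fun (a : ℕ) (_ : a ∈ Finset.range n) => ((a : ℕ) : ZMod n))
    · intro a _; exact Finset.mem_univ _
    · intro a ha b hb hab
      have ha' := ZMod.val_cast_of_lt (Finset.mem_range.mp ha)
      have hb' := ZMod.val_cast_of_lt (Finset.mem_range.mp hb)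
      rw [← ha', ← hb', hab]
    · intro b _
      exact ⟨b.val, Finset.mem_range.mpr (ZMod.val_lt b), ZMod.natCast_rightInverse b⟩
    · intro a _; rfl
  have hnpos : 0 < n := Nat.pos_of_ne_zero (NeZero.ne n)
  have hstep : ∀ j : ZMod n, d (j + 1) = lam * γ j * d j := by
    intro j
    have hjlt := ZMod.val_lt j
    rcases Nat.lt_or_ge (j.val + 1) n with hlt | hge
    · have hval : (j + 1).val = j.val + 1 := by
        have hcast : j + 1 = ((j.val + 1 : ℕ) : ZMod n) := by
          push_cast
          rw [ZMod.natCast_rightInverse j]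
        rw [hcast, ZMod.val_cast_of_lt hlt]
      rw [hd]
      simp only [hval]
      rw [Finset.prod_range_succ, pow_succ, ZMod.natCast_rightInverse j]
      ring
    · have hn1 : j.val = n - 1 := by omega
      have hj1 : j + 1 = 0 := by
        have : j = ((n - 1 : ℕ) : ZMod n) := by
          rw [← hn1, ZMod.natCast_rightInverse j]
        rw [this, ← Nat.cast_add_one, Nat.sub_add_cancel hnpos, ZMod.natCast_self]
      rw [hj1]
      have hd0eq : d 0 = 1 := by
        rw [hd]
        simp [ZMod.val_zero]
      rw [hd0eq, hd]
      simp only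
      have hγj : γ j = γ ((n - 1 : ℕ) : ZMod n) := by
        rw [← hn1, ZMod.natCast_rightInverse j]
      rw [hγj, hn1]
      have : lam * γ ((n - 1 : ℕ) : ZMod n)
          * (lam ^ (n - 1) * ∏ i ∈ Finset.range (n - 1), γ (i : ZMod n))
          = (lam * lam ^ (n - 1))
            * ((∏ i ∈ Finset.range (n - 1), γ (i : ZMod n)) * γ ((n - 1 : ℕ) : ZMod n)) := by
        ring
      rw [this, ← Finset.prod_range_succ (fun i => γ ((i : ℕ) : ZMod n)) (n - 1),
        Nat.sub_add_cancel hnpos, hprod, ← pow_succ', Nat.sub_add_cancel hnpos, hlamn,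
        inv_mul_cancel₀ hc0]
  have hkey2 : ∀ j k : ZMod n,
      (d (j + 1))⁻¹ * A (j + 1) (k + 1) * d (k + 1) = (d j)⁻¹ * A j k * d k := by
    intro j k
    rw [hstep j, hstep k]
    have hswap : A (j + 1) (k + 1) * γ k = γ j * A j k := (key j k).symm
    have h1 := hγ0 j; have h2 := hγ0 k; have h3 := hd0 j; have h4 := hd0 k
    field_simp
    linear_combination hswap
  have hshiftinv : ∀ (s : ℕ) (j k : ZMod n),
      (d (j + (s : ZMod n)))⁻¹ * A (j + (s : ZMod n)) (k + (s : ZMod n)) * d (k + (s : ZMod n))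
        = (d j)⁻¹ * A j k * d k := by
    intro s
    induction s with
    | zero => intro j k; simp
    | succ m ih =>
      intro j k
      have hc1 : ∀ x : ZMod n, x + ((m + 1 : ℕ) : ZMod n) = (x + (m : ZMod n)) + 1 := by
        intro x; push_cast; ring
      rw [hc1, hc1, hkey2 (j + (m : ZMod n)) (k + (m : ZMod n)), ih]
  set a : ZMod n → ℂ := fun m => (d 0)⁻¹ * A 0 m * d m with ha
  have hcircB : ∀ j k, (d j)⁻¹ * A j k * d k = a (k - j) := by
    intro j k
    have h1 := hshiftinv ((-j).val) j k
    rw [ZMod.natCast_rightInverse (-j)] at h1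
    rw [add_neg_cancel, ← sub_eq_add_neg] at h1
    exact h1.symm
  refine ⟨a, Matrix.diagonal (fun j => (d j)⁻¹),
    ⟨1, fun j => (d j)⁻¹, fun i => inv_ne_zero (hd0 i), by
      rw [permMatrix_one_eq, one_mul]⟩, ?_⟩
  ext j k
  rw [Matrix.diagonal_mul, Matrix.mul_diagonal]
  show (d j)⁻¹ * A j k = a (k - j) * (d k)⁻¹
  rw [← hcircB j k, mul_inv_cancel_right₀ (hd0 k)]

end Bwd


/-- Let `A` be an `n × n` Hermitian matrix (`n ≥ 2`) with universal perfect state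
transfer, and let `t u v` be the minimum PST time from `u` to `v`.  Assume
`t 0 k < t 0 (k+1)` for `k = 1,…,n-2` and that `t 0 1` is the minimum of the times
`t k (k+1)`.  Then `A` is switching equivalent to a circulant iff
`t k (k+1) = t 0 1` for every `k ∈ ℤ/nℤ`. -/
theorem stmt_5 {n : ℕ} [NeZero n] (hn : 2 ≤ n) (A : Matrix (ZMod n) (ZMod n) ℂ)
    (hA : A.IsHermitian) (hU : upst A)
    (t : ZMod n → ZMod n → ℝ)
    (ht_mem : ∀ u v : ZMod n, 0 < t u v ∧ pst A u v (t u v))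
    (ht_min : ∀ u v : ZMod n, ∀ s : ℝ, 0 < s → pst A u v s → t u v ≤ s)
    (hmono : ∀ k : ℕ, 1 ≤ k → k ≤ n - 2 →
      t 0 ((k : ZMod n)) < t 0 (((k + 1 : ℕ) : ZMod n)))
    (h01min : ∀ k : ZMod n, t 0 1 ≤ t k (k + 1)) :
    (∃ a : ZMod n → ℂ, SwitchingEquiv A (Circ a)) ↔
      (∀ k : ZMod n, t k (k + 1) = t 0 1) := by
  haveI : Fact (1 < n) := ⟨hn⟩
  set τ : ℝ := t 0 1 with hτ
  have hτpos : 0 < τ := (ht_mem 0 1).1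
  have hpst01 : pst A 0 1 τ := (ht_mem 0 1).2
  constructor
  · rintro ⟨a, M, ⟨σ, d, hd, rfl⟩, hMA⟩
    have htrans := circ_pst_transfer hA a σ d hd hMA
    have hiter : ∀ (m : ℕ) (u v : ZMod n) (s : ℝ), pst A u v s →
        pst A (σ (σ.symm u - (m : ZMod n))) (σ (σ.symm v - (m : ZMod n))) s := by
      intro m
      induction m with
      | zero =>
        intro u v s h
        simpa using h
      | succ m ih =>
        intro u v s h
        have h2 := htrans _ _ _ (ih u v s h)
        rw [Equiv.symm_apply_apply, Equiv.symm_apply_apply] at h2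
        have hrw : ∀ x : ZMod n,
            σ.symm x - (m : ZMod n) - 1 = σ.symm x - ((m + 1 : ℕ) : ZMod n) := by
          intro x; push_cast; ring
        rw [hrw, hrw] at h2
        exact h2
    have hφ : ∀ k : ZMod n, pst A k (σ (σ.symm 1 - σ.symm 0 + σ.symm k)) τ := by
      intro k
      have h2 := hiter ((σ.symm 0 - σ.symm k).val) 0 1 τ hpst01
      rw [ZMod.natCast_rightInverse (σ.symm 0 - σ.symm k)] at h2
      have e1 : σ.symm (0 : ZMod n) - (σ.symm 0 - σ.symm k) = σ.symm k := by ring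
      have e2 : σ.symm (1 : ZMod n) - (σ.symm 0 - σ.symm k)
          = σ.symm 1 - σ.symm 0 + σ.symm k := by ring
      rw [e1, e2, Equiv.apply_symm_apply] at h2
      exact h2
    have hφne : ∀ k : ZMod n, σ (σ.symm 1 - σ.symm 0 + σ.symm k) ≠ k := by
      intro k hc
      apply_fun σ.symm at hc
      rw [Equiv.symm_apply_apply] at hc
      have h3 : σ.symm (1 : ZMod n) = σ.symm 0 := by
        have h4 : σ.symm (1 : ZMod n) - σ.symm 0 = 0 := by
          have h6 : σ.symm (1:ZMod n) - σ.symm 0 + σ.symm k - σ.symm k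
              = σ.symm k - σ.symm k := by rw [hc]
          simpa using h6
        rwa [sub_eq_zero] at h4
      have h5 : (1 : ZMod n) = 0 := σ.symm.injective h3
      exact one_ne_zero h5
    have hchain : ∀ (j' j : ℕ), 1 ≤ j → j < j' → j' ≤ n - 1 →
        t 0 ((j : ℕ) : ZMod n) < t 0 ((j' : ℕ) : ZMod n) := by
      intro j'
      induction j' with
      | zero => intro j h1 hlt hle; omega
      | succ m ih =>
        intro j h1 hlt hle
        rcases Nat.lt_or_ge j m with h | h
        · exact lt_trans (ih j h1 h (by omega)) (hmono m (by omega) (by omega))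
        · have hjm : j = m := by omega
          subst hjm
          exact hmono j h1 (by omega)
    have hstep : ∀ k : ℕ, k ≤ n - 2 →
        (∀ j : ℕ, j ≤ k → pst A ((j : ℕ) : ZMod n) ((j + 1 : ℕ) : ZMod n) τ)
        ∧ (∀ j : ℕ, 1 ≤ j → j ≤ k + 1 →
            pst A 0 ((j : ℕ) : ZMod n) (j * τ) ∧ t 0 ((j : ℕ) : ZMod n) = j * τ) := by
      intro k
      induction k with
      | zero =>
        intro _
        constructor
        · intro j hj
          have hj0 : j = 0 := by omega
          subst hj0
          simpa using hpst01
        · intro j h1 h2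
          have hj1 : j = 1 := by omega
          subst hj1
          constructor
          · simpa using hpst01
          · simp [hτ.symm]
      | succ k ih =>
        intro hk2
        have ihk := ih (by omega)
        have h0K : pst A 0 ((k + 1 : ℕ) : ZMod n) ((k + 1 : ℕ) * τ) :=
          (ihk.2 (k + 1) (by omega) (by omega)).1
        have htK : t 0 ((k + 1 : ℕ) : ZMod n) = (k + 1 : ℕ) * τ :=
          (ihk.2 (k + 1) (by omega) (by omega)).2
        have hm := hφ ((k + 1 : ℕ) : ZMod n)
        have hmne := hφne ((k + 1 : ℕ) : ZMod n)
        set m : ZMod n := σ (σ.symm 1 - σ.symm 0 + σ.symm ((k + 1 : ℕ) : ZMod n)) with hmdef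
        set aK : ℝ := t 0 ((k + 1 + 1 : ℕ) : ZMod n) with haKdef
        have hamem := ht_mem 0 ((k + 1 + 1 : ℕ) : ZMod n)
        have hagt : (k + 1 : ℕ) * τ < aK := by
          have := hchain (k + 1 + 1) (k + 1) (by omega) (by omega) (by omega)
          rw [htK] at this
          exact this
        have hps : pst A ((k + 1 : ℕ) : ZMod n) ((k + 1 + 1 : ℕ) : ZMod n)
            (aK - (k + 1 : ℕ) * τ) := pst_shift hA h0K hamem.2
        have hcastK1 : ((k + 1 + 1 : ℕ) : ZMod n) = ((k + 1 : ℕ) : ZMod n) + 1 := by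
          push_cast; ring
        have h01K : τ ≤ t ((k + 1 : ℕ) : ZMod n) (((k + 1 : ℕ) : ZMod n) + 1) := h01min _
        have htle : t ((k + 1 : ℕ) : ZMod n) (((k + 1 : ℕ) : ZMod n) + 1)
            ≤ aK - (k + 1 : ℕ) * τ := by
          apply ht_min _ _ _ (by linarith) (by rwa [hcastK1] at hps)
        have haK1 : ((k + 1 : ℕ) : ℝ) * τ + τ ≤ aK := by linarith
        have hKτ : (0 : ℝ) ≤ (k + 1 : ℕ) * τ :=
          mul_nonneg (Nat.cast_nonneg _) hτpos.le
        have hmvlt := ZMod.val_lt m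
        obtain hc0 | hclow | hceq | hchigh :
            m.val = 0 ∨ (1 ≤ m.val ∧ m.val ≤ k + 1) ∨ m.val = k + 1 + 1
              ∨ (k + 1 + 2 ≤ m.val) := by omega
        · -- m = 0 : contradiction
          exfalso
          have hm0eq : m = 0 := by
            rw [← ZMod.natCast_rightInverse m, hc0, Nat.cast_zero]
          have hm0 : pst A ((k + 1 : ℕ) : ZMod n) 0 τ := by rwa [hm0eq] at hm
          have hge : τ ≤ aK - (k + 1 : ℕ) * τ := le_trans h01K htle
          rcases eq_or_lt_of_le hge with heq | hgt
          · have h7 : ((k + 1 + 1 : ℕ) : ZMod n) = 0 :=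
              pst_target_unique hA (by rwa [← heq] at hps) hm0
            apply_fun ZMod.val at h7
            rw [ZMod.val_cast_of_lt (by omega), ZMod.val_zero] at h7
            omega
          · have h5 := pst_shift hA hm0 hps
            have h6 := ht_min 0 ((k + 1 + 1 : ℕ) : ZMod n) _ (by linarith) h5
            rw [← haKdef] at h6
            linarith
        · -- 1 ≤ m.val ≤ k+1 : contradiction
          exfalso
          have hpw := ihk.1 (m.val - 1) (by omega)
          have hcast2 : ((m.val - 1) + 1 : ℕ) = m.val := by omega
          rw [hcast2, ZMod.natCast_rightInverse m] at hpw
          have hsrc := pst_source_unique hA hpw hm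
          apply_fun ZMod.val at hsrc
          rw [ZMod.val_cast_of_lt (by omega), ZMod.val_cast_of_lt (by omega)] at hsrc
          omega
        · -- m = k+2 : the good case
          have hmK1 : m = ((k + 1 + 1 : ℕ) : ZMod n) := by
            rw [← ZMod.natCast_rightInverse m, hceq]
          have hpK : pst A ((k + 1 : ℕ) : ZMod n) ((k + 1 + 1 : ℕ) : ZMod n) τ := by
            rwa [hmK1] at hm
          have hcomp : pst A 0 ((k + 1 + 1 : ℕ) : ZMod n) ((k + 1 : ℕ) * τ + τ) :=
            pst_comp hA h0K hpK
          have hle2 : aK ≤ ((k + 1 : ℕ) : ℝ) * τ + τ :=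
            ht_min 0 _ _ (by linarith) hcomp
          have haKeq : aK = ((k + 1 : ℕ) : ℝ) * τ + τ := le_antisymm hle2 haK1
          constructor
          · intro j hj
            rcases Nat.lt_or_ge j (k + 1) with h | h
            · exact ihk.1 j (by omega)
            · have hjK : j = k + 1 := by omega
              subst hjK
              exact hpK
          · intro j h1 h2
            rcases Nat.lt_or_ge j (k + 1 + 1) with h | h
            · exact ihk.2 j h1 (by omega)
            · have hjK : j = k + 1 + 1 := by omega
              subst hjK
              constructor
              · have htime : ((k + 1 + 1 : ℕ) : ℝ) * τ = ((k + 1 : ℕ) : ℝ) * τ + τ := by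
                  push_cast; ring
                rw [htime]
                exact hcomp
              · rw [← haKdef, haKeq]
                push_cast; ring
        · -- m.val ≥ k+3 : contradiction
          exfalso
          have hcomp : pst A 0 m ((k + 1 : ℕ) * τ + τ) := pst_comp hA h0K hm
          have hla : t 0 m ≤ (k + 1 : ℕ) * τ + τ := ht_min 0 m _ (by linarith) hcomp
          have hchainlt := hchain m.val (k + 1 + 1) (by omega) (by omega) (by omega)
          rw [ZMod.natCast_rightInverse m, ← haKdef] at hchainlt
          linarith
    have hmain := hstep (n - 2) (le_refl _)
    intro k
    rcases Nat.lt_or_ge k.val (n - 1) with hlt | hge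
    · have hp := hmain.1 k.val (by omega)
      have hkc : ((k.val : ℕ) : ZMod n) = k := ZMod.natCast_rightInverse k
      have hk1 : ((k.val + 1 : ℕ) : ZMod n) = k + 1 := by push_cast; rw [hkc]
      rw [hkc, hk1] at hp
      exact le_antisymm (ht_min k (k + 1) τ hτpos hp) (h01min k)
    · have hkval : k.val = n - 1 := by have := ZMod.val_lt k; omega
      have hk10 : k + 1 = 0 := by
        rw [← ZMod.natCast_rightInverse k, hkval, ← Nat.cast_add_one,
          Nat.sub_add_cancel (by omega), ZMod.natCast_self]
      have hm := hφ k
      have hmne := hφne k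
      set m : ZMod n := σ (σ.symm 1 - σ.symm 0 + σ.symm k) with hmdef
      have hm0 : m = 0 := by
        by_contra hm0
        have hmv1 : 1 ≤ m.val := by
          rcases Nat.eq_zero_or_pos m.val with h | h
          · exact absurd ((ZMod.val_eq_zero m).mp h) hm0
          · exact h
        have hmvlt := ZMod.val_lt m
        have hpw := hmain.1 (m.val - 1) (by omega)
        have hcast2 : ((m.val - 1) + 1 : ℕ) = m.val := by omega
        rw [hcast2, ZMod.natCast_rightInverse m] at hpw
        have hsrc := pst_source_unique hA hpw hm
        apply_fun ZMod.val at hsrc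
        rw [ZMod.val_cast_of_lt (by omega)] at hsrc
        omega
      rw [hm0] at hm
      rw [hk10]
      refine le_antisymm (ht_min k 0 τ hτpos hm) ?_
      have := h01min k
      rwa [hk10] at this
  · intro hall
    apply switching_of_shift_walk hA τ
    intro k
    have h2 := (ht_mem k (k + 1)).2
    rwa [hall k] at h2
end

section
/- Let p be a prime and let G = Circ(a_0,…,a_{p−1}) be a p×p Hermitian circulant matrix with universal perfect state transfer. Then a_j ≠ 0 for all j = 1,…,p−1. -/
open Matrix Complex

section Aux

open Polynomial NormedSpace

variable {p : ℕ} [NeZero p]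

private lemma lin_indep_prim_root {p : ℕ} (hp : p.Prime) {ω : ℂ} (hω : IsPrimitiveRoot ω p)
    (d : ℕ → ℤ) (h : ∑ i ∈ Finset.range p, (d i : ℂ) * ω ^ i = 0) :
    ∀ i < p, d i = d (p - 1) := by
  haveI : Fact p.Prime := ⟨hp⟩
  have hp1 : 1 < p := hp.one_lt
  set q : ℚ[X] := ∑ i ∈ Finset.range (p - 1), C ((d i - d (p - 1) : ℤ) : ℚ) * X ^ i with hq
  have hgeom : ∑ i ∈ Finset.range p, ω ^ i = 0 := hω.geom_sum_eq_zero hp1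
  have haeval : aeval ω q = 0 := by
    rw [hq]
    rw [map_sum]
    have : ∀ i ∈ Finset.range (p - 1),
        aeval ω (C ((d i - d (p - 1) : ℤ) : ℚ) * X ^ i) = ((d i : ℂ) - d (p - 1)) * ω ^ i := by
      intro i _
      simp [aeval_C]
    rw [Finset.sum_congr rfl this]
    have hsplit : ∑ i ∈ Finset.range p, ((d i : ℂ) - d (p - 1)) * ω ^ i = 0 := by
      have : ∑ i ∈ Finset.range p, ((d i : ℂ) - d (p - 1)) * ω ^ i
          = ∑ i ∈ Finset.range p, (d i : ℂ) * ω ^ i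
            - (d (p-1) : ℂ) * ∑ i ∈ Finset.range p, ω ^ i := by
        rw [Finset.mul_sum, ← Finset.sum_sub_distrib]
        exact Finset.sum_congr rfl fun i _ => by ring
      rw [this, h, hgeom]; ring
    have hlast : ∑ i ∈ Finset.range p, ((d i : ℂ) - d (p - 1)) * ω ^ i
        = ∑ i ∈ Finset.range (p - 1), ((d i : ℂ) - d (p - 1)) * ω ^ i := by
      have : p = (p - 1) + 1 := (Nat.succ_pred_eq_of_pos hp.pos).symm
      rw [this, Finset.sum_range_succ]
      simp
    rw [← hlast, hsplit]
  have hdvd : minpoly ℚ ω ∣ q := minpoly.dvd ℚ ω haeval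
  have hdeg : q.natDegree < (minpoly ℚ ω).natDegree := by
    have h1 : (minpoly ℚ ω).natDegree = p - 1 := by
      rw [← cyclotomic_eq_minpoly_rat hω hp.pos, natDegree_cyclotomic, Nat.totient_prime hp]
    have h2 : q.natDegree ≤ p - 2 := by
      apply Polynomial.natDegree_sum_le_of_forall_le
      intro i hi
      refine le_trans (natDegree_C_mul_le _ _) ?_
      rw [natDegree_X_pow]
      have := Finset.mem_range.mp hi
      omega
    omega
  have hq0 : q = 0 := Polynomial.eq_zero_of_dvd_of_natDegree_lt hdvd hdeg
  intro i hi
  rcases Nat.lt_or_ge i (p - 1) with h' | h'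
  · have := congrArg (fun r => Polynomial.coeff r i) hq0
    simp only [hq, Polynomial.finset_sum_coeff, Polynomial.coeff_C_mul,
      Polynomial.coeff_X_pow, Polynomial.coeff_zero] at this
    rw [Finset.sum_eq_single i] at this
    · simp at this
      exact_mod_cast sub_eq_zero.mp (by exact_mod_cast this)
    · intro b _ hb; simp [hb, Ne.symm hb]
    · intro hni; exact absurd (Finset.mem_range.mpr h') hni
  · have : i = p - 1 := by omega
    rw [this]

private lemma exp_mulVec_eigen (B : Matrix (ZMod p) (ZMod p) ℂ) (v : ZMod p → ℂ) (μ : ℂ)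
    (h : B.mulVec v = μ • v) :
    (exp B).mulVec v = Complex.exp μ • v := by
  letI : SeminormedRing (Matrix (ZMod p) (ZMod p) ℂ) := Matrix.linftyOpSemiNormedRing
  letI : NormedRing (Matrix (ZMod p) (ZMod p) ℂ) := Matrix.linftyOpNormedRing
  letI : NormedAlgebra ℂ (Matrix (ZMod p) (ZMod p) ℂ) := Matrix.linftyOpNormedAlgebra
  have hpow : ∀ n : ℕ, (B ^ n).mulVec v = (μ ^ n) • v := by
    intro n
    induction n with
    | zero => simp [Matrix.one_mulVec]
    | succ n ih =>
      rw [pow_succ', pow_succ', ← Matrix.mulVec_mulVec, ih, Matrix.mulVec_smul, h, smul_smul,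
        mul_comm]
  let L : Matrix (ZMod p) (ZMod p) ℂ →L[ℂ] (ZMod p → ℂ) :=
    LinearMap.toContinuousLinearMap
      { toFun := fun M => M.mulVec v
        map_add' := fun M N => Matrix.add_mulVec M N v
        map_smul' := fun c M => Matrix.smul_mulVec c M v }
  have hL : ∀ M, L M = M.mulVec v := fun _ => rfl
  rw [← hL, exp_eq_tsum ℂ]
  rw [L.map_tsum (expSeries_summable' (𝕂 := ℂ) B)]
  have : ∀ n : ℕ, L (((n.factorial : ℂ))⁻¹ • B ^ n) = ((n.factorial : ℂ)⁻¹ * μ ^ n) • v := by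
    intro n
    rw [L.map_smul, hL, hpow, smul_smul]
  simp_rw [this]
  rw [Summable.tsum_smul_const, Complex.exp_eq_exp_ℂ, exp_eq_tsum ℂ]
  · simp [smul_smul]
  · exact (expSeries_summable' (𝕂 := ℂ) μ).congr (by intro n; simp [smul_eq_mul])

private lemma qwalk_unitary (A : Matrix (ZMod p) (ZMod p) ℂ) (hA : A.IsHermitian) (t : ℝ) :
    qwalk A t * (qwalk A t)ᴴ = 1 := by
  set B := (-(Complex.I * t)) • A with hB
  have hBH : Bᴴ = -B := by
    rw [hB, Matrix.conjTranspose_smul, hA.eq]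
    rw [← neg_smul]
    congr 1
    simp [Complex.ext_iff]
  have h1 : (qwalk A t)ᴴ = exp (-B) := by
    rw [qwalk, ← Matrix.exp_conjTranspose, hBH]
  have h2 := Matrix.exp_add_of_commute B (-B) (Commute.neg_right (Commute.refl B))
  rw [h1, qwalk, ← hB, ← h2, add_neg_cancel, NormedSpace.exp_zero]

private lemma row_eq_zero_of_unitary {M : Matrix (ZMod p) (ZMod p) ℂ} (h : M * Mᴴ = 1)
    {u v : ZMod p} (habs : ‖M v u‖ = 1) :
    ∀ m : ZMod p, m ≠ u → M v m = 0 := by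
  have h1 : ∑ m : ZMod p, (Complex.normSq (M v m) : ℂ) = 1 := by
    have := congrFun (congrFun h v) v
    rw [Matrix.mul_apply] at this
    simp only [Matrix.conjTranspose_apply, Matrix.one_apply_eq] at this
    simpa [Complex.mul_conj] using this
  have h2 : ∑ m : ZMod p, Complex.normSq (M v m) = 1 := by
    exact_mod_cast h1
  have hu : Complex.normSq (M v u) = 1 := by
    rw [Complex.normSq_eq_norm_sq, habs]; norm_num
  have h3 : ∑ m ∈ Finset.univ.erase u, Complex.normSq (M v m) = 0 := by
    have h4 := Finset.add_sum_erase Finset.univ (fun m => Complex.normSq (M v m))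
      (Finset.mem_univ u)
    rw [← h4, hu] at h2
    linarith
  intro m hm
  have := (Finset.sum_eq_zero_iff_of_nonneg (fun i _ => Complex.normSq_nonneg (M v i))).mp h3
    m (Finset.mem_erase.mpr ⟨hm, Finset.mem_univ m⟩)
  exact Complex.normSq_eq_zero.mp this

private lemma circ_mulVec (a : ZMod p → ℂ) (k : ZMod p) :
    (Circ a).mulVec (fun m => ZMod.stdAddChar (m * k)) =
      (∑ s : ZMod p, a s * ZMod.stdAddChar (s * k)) • (fun m => ZMod.stdAddChar (m * k)) := by
  funext j
  show ∑ m : ZMod p, a (m - j) * ZMod.stdAddChar (m * k) = _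
  have := Fintype.sum_equiv (Equiv.addRight j)
    (fun s => (a s * ZMod.stdAddChar (s * k)) * ZMod.stdAddChar (j * k))
    (fun m => a (m - j) * ZMod.stdAddChar (m * k))
    (by
      intro s
      simp only [Equiv.coe_addRight, add_sub_cancel_right]
      rw [add_mul, AddChar.map_add_eq_mul]
      ring)
  rw [← this, ← Finset.sum_mul]
  simp [Pi.smul_apply, smul_eq_mul]

end Aux

/-- If `p` is prime and the Hermitian circulant `Circ(a₀,…,a_{p-1})` has universal
perfect state transfer, then `a_j ≠ 0` for all `j ≠ 0`. -/
theorem stmt_11 {p : ℕ} [NeZero p] (hp : p.Prime) (a : ZMod p → ℂ)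
    (hHerm : (Circ a).IsHermitian) (hU : upst (Circ a)) :
    ∀ j : ZMod p, j ≠ 0 → a j ≠ 0 := by
  haveI : Fact p.Prime := ⟨hp⟩
  intro j hj haj
  obtain ⟨t, ht, hpst⟩ := hU 1 0
  set E := qwalk (Circ a) t with hE
  have hrow : ∀ m : ZMod p, m ≠ 1 → E 0 m = 0 :=
    row_eq_zero_of_unitary (qwalk_unitary _ hHerm t) hpst
  set e : AddChar (ZMod p) ℂ := ZMod.stdAddChar with he
  set lam : ZMod p → ℂ := fun k => ∑ s : ZMod p, a s * e (s * k) with hlamdef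
  -- eigenvalue relation for the walk
  have heig : ∀ k : ZMod p,
      E.mulVec (fun m => e (m * k)) = Complex.exp (-(Complex.I * t) * lam k) •
        (fun m => e (m * k)) := by
    intro k
    have hB : ((-(Complex.I * t)) • Circ a).mulVec (fun m => e (m * k))
        = (-(Complex.I * t) * lam k) • (fun m => e (m * k)) := by
      rw [Matrix.smul_mulVec, circ_mulVec, smul_smul]
    exact exp_mulVec_eigen _ _ _ hB
  -- the key identity exp(-it λ_k) = E 0 1 * e k
  have hkey : ∀ k : ZMod p, Complex.exp (-(Complex.I * t) * lam k) = E 0 1 * e k := by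
    intro k
    have h0 := congrFun (heig k) 0
    have hLHS : E.mulVec (fun m => e (m * k)) 0 = E 0 1 * e k := by
      show ∑ m : ZMod p, E 0 m * e (m * k) = E 0 1 * e k
      rw [Finset.sum_eq_single 1]
      · rw [one_mul]
      · intro b _ hb; rw [hrow b hb, zero_mul]
      · intro h; exact absurd (Finset.mem_univ 1) h
    rw [hLHS] at h0
    simp only [Pi.smul_apply, smul_eq_mul, zero_mul, AddChar.map_zero_eq_one, mul_one] at h0
    exact h0.symm
  -- integer structure of the eigenvalues
  have hchar : ∀ k : ZMod p, e k = Complex.exp (2 * Real.pi * Complex.I * k.val / p) := by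
    intro k
    rw [he, ZMod.stdAddChar_apply, ZMod.toCircle_apply]
  have hexist : ∀ k : ZMod p, ∃ n : ℤ,
      -(Complex.I * t) * lam k =
        -(Complex.I * t) * lam 0 + 2 * Real.pi * Complex.I * k.val / p +
          n * (2 * Real.pi * Complex.I) := by
    intro k
    have h1 : Complex.exp (-(Complex.I * t) * lam k)
        = Complex.exp (-(Complex.I * t) * lam 0 + 2 * Real.pi * Complex.I * k.val / p) := by
      rw [Complex.exp_add, hkey k, ← hchar k]
      congr 1
      rw [hkey 0, AddChar.map_zero_eq_one, mul_one]
    rcases Complex.exp_eq_exp_iff_exists_int.mp h1 with ⟨n, hn⟩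
    exact ⟨n, hn⟩
  choose nn hnn using hexist
  set r : ZMod p → ℤ := fun k => (k.val : ℤ) + p * nn k with hr
  have htne : (t : ℂ) ≠ 0 := by
    exact_mod_cast ne_of_gt ht
  have hpne : (p : ℂ) ≠ 0 := by
    exact_mod_cast hp.ne_zero
  set c : ℝ := -(2 * Real.pi) / (t * p) with hc
  have hcne : c ≠ 0 := by
    rw [hc]
    have hpi := Real.pi_ne_zero
    have : (0:ℝ) < t * p := mul_pos ht (by exact_mod_cast hp.pos)
    intro hcz
    rw [div_eq_zero_iff] at hcz
    rcases hcz with h | h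
    · exact hpi (by linarith)
    · linarith
  have hlam : ∀ k : ZMod p, lam k = lam 0 + (c : ℂ) * (r k : ℂ) := by
    intro k
    have hti : (-(Complex.I * (t:ℂ))) ≠ 0 := by
      simp [Complex.I_ne_zero, htne]
    apply mul_left_cancel₀ hti
    rw [hnn k, hr]
    push_cast
    rw [hc]; push_cast
    field_simp
    ring
  -- Fourier inversion at j
  have hmul : ∀ b : ZMod p, ∑ k : ZMod p, e (k * b) = if b = 0 then (p : ℂ) else 0 := by
    intro b
    have := AddChar.sum_mulShift (ψ := e) b (ZMod.isPrimitive_stdAddChar p)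
    rw [ZMod.card] at this
    exact_mod_cast this
  have hinv : ∑ k : ZMod p, lam k * e (k * (-j)) = p * a j := by
    rw [hlamdef]
    simp only [Finset.sum_mul]
    rw [Finset.sum_comm]
    have : ∀ s : ZMod p, ∑ k : ZMod p, a s * e (s * k) * e (k * (-j))
        = a s * (if s - j = 0 then (p : ℂ) else 0) := by
      intro s
      rw [← hmul (s - j), Finset.mul_sum]
      congr 1
      funext k
      rw [mul_assoc, ← AddChar.map_add_eq_mul]
      congr 2
      ring
    rw [Finset.sum_congr rfl fun s _ => this s]
    simp [sub_eq_zero, mul_ite, mul_zero, Finset.sum_ite_eq', mul_comm]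
  have hjne : (-j) ≠ 0 := neg_ne_zero.mpr hj
  have h0sum : ∑ k : ZMod p, e (k * (-j)) = 0 := by
    rw [hmul (-j)]
    simp [hjne]
  have hzero : ∑ k : ZMod p, lam k * e (k * (-j)) = 0 := by
    rw [hinv, haj, mul_zero]
  have hsplit : ∑ k : ZMod p, lam k * e (k * (-j))
      = lam 0 * (∑ k : ZMod p, e (k * (-j)))
        + (c : ℂ) * ∑ k : ZMod p, (r k : ℂ) * e (k * (-j)) := by
    rw [Finset.mul_sum, Finset.mul_sum, ← Finset.sum_add_distrib]
    refine Finset.sum_congr rfl fun k _ => ?_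
    rw [hlam k]
    ring
  have hrsum : ∑ k : ZMod p, (r k : ℂ) * e (k * (-j)) = 0 := by
    rw [hsplit, h0sum, mul_zero, zero_add] at hzero
    have hcne' : (c : ℂ) ≠ 0 := Complex.ofReal_ne_zero.mpr hcne
    exact (mul_eq_zero.mp hzero).resolve_left hcne'
  have hreindex : ∑ m : ZMod p, ((r (m * (-j)⁻¹) : ℤ) : ℂ) * e m = 0 := by
    rw [← hrsum]
    refine (Fintype.sum_equiv (Equiv.mulRight₀ (-j) hjne)
      (fun k => (r k : ℂ) * e (k * (-j)))
      (fun m => ((r (m * (-j)⁻¹) : ℤ) : ℂ) * e m) ?_).symm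
    intro k
    simp only [Equiv.coe_fn_mk, Equiv.mulRight₀_apply]
    rw [mul_assoc, mul_inv_cancel₀ hjne, mul_one]
  set ω : ℂ := Complex.exp (2 * Real.pi * Complex.I / p) with hw
  have hω : IsPrimitiveRoot ω p := Complex.isPrimitiveRoot_exp p hp.ne_zero
  have hepow : ∀ x : ZMod p, e x = ω ^ x.val := by
    intro x
    rw [hchar x, hw, ← Complex.exp_nat_mul]
    congr 1
    ring
  set d : ℕ → ℤ := fun i => r ((i : ZMod p) * (-j)⁻¹) with hd
  have hrange : ∑ i ∈ Finset.range p, (d i : ℂ) * ω ^ i = 0 := by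
    rw [← hreindex]
    refine Finset.sum_nbij' (fun i => ((i : ZMod p))) (fun m => m.val) ?_ ?_ ?_ ?_ ?_
    · intro i _; exact Finset.mem_univ _
    · intro m _
      exact Finset.mem_range.mpr (ZMod.val_lt m)
    · intro i hi
      exact ZMod.val_cast_of_lt (Finset.mem_range.mp hi)
    · intro m _
      exact ZMod.natCast_zmod_val m
    · intro i hi
      rw [hepow, ZMod.val_cast_of_lt (Finset.mem_range.mp hi)]
  have hall := lin_indep_prim_root hp hω d hrange
  haveI : Fact (1 < p) := ⟨hp.one_lt⟩
  have hd0 : d 0 = r 0 := by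
    rw [hd]
    norm_num
  have hd1 : d ((-j).val) = r 1 := by
    rw [hd]
    simp only [ZMod.natCast_zmod_val]
    rw [mul_inv_cancel₀ hjne]
  have e0 : d 0 = d (p - 1) := hall 0 hp.pos
  have e1 : d ((-j).val) = d (p - 1) := hall _ (ZMod.val_lt _)
  have hr01 : r 0 = r 1 := by rw [← hd0, ← hd1, e0, e1]
  rw [hr] at hr01
  simp only [ZMod.val_zero, ZMod.val_one] at hr01
  push_cast at hr01
  have hdvd1 : (p : ℤ) ∣ 1 := ⟨nn 0 - nn 1, by rw [mul_sub]; linarith⟩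
  have := Int.le_of_dvd one_pos hdvd1
  have h2 := hp.two_le
  omega
end
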